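/- The distinct elements T^{𝒞}, one for each equivalence class 𝒞 of pairs of length-k partitions with entries in {1,...,n} under the relation (a,b) ∼ (c,d) iff ∃σ ∈ S_n with a = σc, b = σd, form a linearly independent set, and hence a basis of End_{S_n}(Sym^k(ℂⁿ)). -/

import Mathlib

/-- Model of the symmetric power `Sym^k(ℂⁿ)`: the free ℂ-module on the basis
indexed by length-`k` partitions with entries in `{1,…,n}`, i.e. size-`k`
multisets from an `n`-element set (basis vector `v_λ = Pi.single λ 1`). -/
abbrev SymV (n k : ℕ) : Type := Sym (Fin n) k → ℂ

/-- The diagonal action of a permutation matrix `σ ∈ S_n ⊆ GL_n(ℂ)` on `Sym^k(ℂⁿ)`: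
the linear map sending the basis vector `v_λ` to `v_{σλ}`, where `σλ` is obtained by
applying `σ` entrywise (and sorting). -/
noncomputable def permAct (n k : ℕ) (σ : Equiv.Perm (Fin n)) : Module.End ℂ (SymV n k) :=
  LinearMap.funLeft ℂ ℂ (Sym.map ⇑σ⁻¹)

/-- The centralizer algebra `End_{S_n}(Sym^k(ℂⁿ))`. -/
noncomputable def centAlg (n k : ℕ) : Subalgebra ℂ (Module.End ℂ (SymV n k)) :=
  Subalgebra.centralizer ℂ (Set.range (permAct n k))

/-- The matrix unit `E^ν_γ` sending the basis vector `v_ν` to `v_γ` and every other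
basis vector to `0`. -/
noncomputable def Eunit (n k : ℕ) (nu ga : Sym (Fin n) k) : Module.End ℂ (SymV n k) :=
  (LinearMap.proj nu).smulRight (Pi.single ga 1)

open scoped Classical in
/-- `T^λ_μ`, the sum of the matrix units `E^ν_γ` over all pairs `(ν, γ)` for which
there exists `ρ ∈ S_n` with `λ = ρν` and `μ = ργ`. -/
noncomputable def Tmap (n k : ℕ) (lam mu : Sym (Fin n) k) : Module.End ℂ (SymV n k) :=
  ∑ p : Sym (Fin n) k × Sym (Fin n) k,
    if ∃ ρ : Equiv.Perm (Fin n), lam = Sym.map ρ p.1 ∧ mu = Sym.map ρ p.2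
    then Eunit n k p.1 p.2 else 0

/-!
Reading off matrix entries identifies `End(Sym^k ℂⁿ)` with functions on pairs of partitions.
Under this identification `T^λ_μ` becomes the indicator function of the `S_n`-orbit of `(λ, μ)`,
and the centralizer becomes the space of `S_n`-invariant functions. For any group acting on a
finite set, the indicators of distinct orbits are linearly independent, having disjoint nonempty
supports, and they span the invariant functions: an invariant function is the sum over the
orbits of its value on the orbit times the orbit's indicator.
-/

namespace MulAction

variable (G K : Type*) {X : Type*} [Group G] [MulAction G X] [Ring K]

noncomputable def orbitIndicator (x : X) : X → K := (orbit G x).indicator 1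

variable {G K}

open scoped Classical in
theorem orbitIndicator_apply (x y : X) :
    orbitIndicator G K x y = if y ∈ orbit G x then 1 else 0 := rfl

theorem orbitIndicator_eq_iff [Nontrivial K] {x y : X} :
    orbitIndicator G K x = orbitIndicator G K y ↔ x ∈ orbit G y :=
  ⟨fun h => orbit_eq_iff.mp (Set.indicator_one_inj K h), fun h => by
    rw [orbitIndicator, orbitIndicator, orbit_eq_iff.mpr h]⟩

open scoped Classical in
theorem linearIndepOn_id_range_orbitIndicator [Nontrivial K] :
    LinearIndepOn K id (Set.range (orbitIndicator G K : X → X → K)) := by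
  rw [LinearIndepOn, linearIndependent_iff']
  intro s c hsum i hi
  obtain ⟨x, hx⟩ := i.2
  have hval := congrFun hsum x
  simp only [Finset.sum_apply, Pi.smul_apply, id, smul_eq_mul, Pi.zero_apply] at hval
  rwa [Finset.sum_eq_single_of_mem _ hi, ← hx, orbitIndicator_apply, if_pos (mem_orbit_self x),
    mul_one] at hval
  intro j _ hji
  obtain ⟨y, hy⟩ := j.2
  rw [← hy, orbitIndicator_apply, if_neg, mul_zero]
  exact fun h => hji <| Subtype.ext <| by
    rw [← hx, ← hy, orbitIndicator_eq_iff.mpr (mem_orbit_symm.mpr h)]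

open scoped Classical in
theorem mem_span_range_orbitIndicator_iff [Finite X] {F : X → K} :
    F ∈ Submodule.span K (Set.range (orbitIndicator G K)) ↔
      ∀ (g : G) x, F (g • x) = F x := by
  constructor
  · intro hF g
    refine Submodule.span_induction ?_ (by simp) (fun _ _ _ _ h₁ h₂ x => by simp [h₁, h₂])
      (fun a _ _ h x => by simp [h]) hF
    rintro - ⟨y, rfl⟩ x
    simp only [orbitIndicator_apply, ← orbit_eq_iff, orbit_smul]
  · intro hF
    have hconst : ∀ x y, x ∈ orbit G y → F x = F y := by
      rintro x y ⟨g, rfl⟩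
      exact hF g y
    have := Fintype.ofFinite (orbitRel.Quotient G X)
    suffices F = ∑ O : orbitRel.Quotient G X, F O.out • orbitIndicator G K O.out by
      rw [this]
      exact Submodule.sum_mem _ fun O _ =>
        Submodule.smul_mem _ _ (Submodule.subset_span ⟨_, rfl⟩)
    funext x
    simp only [Finset.sum_apply, Pi.smul_apply, smul_eq_mul, orbitIndicator_apply]
    have hmem (O : orbitRel.Quotient G X) : x ∈ orbit G O.out ↔ Quotient.mk _ x = O := by
      rw [← orbitRel.Quotient.orbit_eq_orbit_out O Quotient.out_eq', orbitRel.Quotient.mem_orbit]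
    rw [Finset.sum_eq_single (Quotient.mk _ x)
        (fun O _ hO => by rw [if_neg (hO ∘ Eq.symm ∘ (hmem O).mp), mul_zero]) (by simp),
      if_pos ((hmem _).mpr rfl), mul_one]
    exact hconst x _ ((hmem _).mpr rfl)

end MulAction

instance Sym.instMulAction {G α : Type*} [Monoid G] [MulAction G α] {k : ℕ} :
    MulAction G (Sym α k) where
  smul g s := s.map (g • ·)
  one_smul s := by
    change s.map _ = s
    simp only [one_smul]
    exact Sym.map_id' s
  mul_smul g h s := by
    change s.map _ = (s.map _).map _
    simp only [Sym.map_map, Function.comp_def, mul_smul]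

variable (R ι : Type*) [CommSemiring R] [Fintype ι] [DecidableEq ι]

noncomputable def entryEquiv : Module.End R (ι → R) ≃ₗ[R] (ι × ι → R) :=
  LinearMap.toMatrix'.trans ((Matrix.transposeLinearEquiv ι ι R R).trans
    (LinearEquiv.curry R R ι ι).symm)

variable {R ι}

theorem entryEquiv_apply (f : Module.End R (ι → R)) (p : ι × ι) :
    entryEquiv R ι f p = f (Pi.single p.1 1) p.2 := rfl

section Tmap

open MulAction

variable {n k : ℕ}

theorem permAct_apply (σ : Equiv.Perm (Fin n)) (v : SymV n k) (s : Sym (Fin n) k) :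
    permAct n k σ v s = v (σ⁻¹ • s) := rfl

theorem permAct_single (σ : Equiv.Perm (Fin n)) (ν : Sym (Fin n) k) :
    permAct n k σ (Pi.single ν 1) = Pi.single (σ • ν) 1 := by
  funext s
  simp only [permAct_apply, Pi.single_apply, inv_smul_eq_iff]

theorem entryEquiv_permAct_mul (σ : Equiv.Perm (Fin n)) (f : Module.End ℂ (SymV n k))
    (p : Sym (Fin n) k × Sym (Fin n) k) :
    entryEquiv ℂ _ (permAct n k σ * f) p = entryEquiv ℂ _ f (p.1, σ⁻¹ • p.2) := rfl

theorem entryEquiv_mul_permAct (σ : Equiv.Perm (Fin n)) (f : Module.End ℂ (SymV n k))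
    (p : Sym (Fin n) k × Sym (Fin n) k) :
    entryEquiv ℂ _ (f * permAct n k σ) p = entryEquiv ℂ _ f (σ • p.1, p.2) := by
  simp only [entryEquiv_apply, Module.End.mul_apply, permAct_single]

theorem mem_centAlg_iff {f : Module.End ℂ (SymV n k)} :
    f ∈ centAlg n k ↔
      ∀ (σ : Equiv.Perm (Fin n)) p, entryEquiv ℂ _ f (σ • p) = entryEquiv ℂ _ f p := by
  rw [centAlg, Subalgebra.mem_centralizer_iff, Set.forall_mem_range]
  refine forall_congr' fun σ => ?_
  rw [← (entryEquiv ℂ _).injective.eq_iff, funext_iff]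
  simp only [entryEquiv_permAct_mul, entryEquiv_mul_permAct]
  constructor
  · rintro h ⟨ν, γ⟩
    simpa using (h (ν, σ • γ)).symm
  · rintro h ⟨ν, γ⟩
    rw [← h (ν, σ⁻¹ • γ)]
    simp

theorem entryEquiv_Eunit (ν γ : Sym (Fin n) k) :
    entryEquiv ℂ _ (Eunit n k ν γ) = Pi.single (ν, γ) 1 := by
  funext ⟨a, b⟩
  simp only [entryEquiv_apply, Eunit, LinearMap.smulRight_apply, LinearMap.proj_apply,
    Pi.smul_apply, Pi.single_apply, smul_eq_mul, Prod.mk.injEq, mul_boole, ← ite_and]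
  exact if_congr (and_comm.trans (and_congr_left' eq_comm)) rfl rfl

theorem mem_orbit_iff_exists_map {p q : Sym (Fin n) k × Sym (Fin n) k} :
    q ∈ orbit (Equiv.Perm (Fin n)) p ↔
      ∃ ρ : Equiv.Perm (Fin n), p.1 = Sym.map ρ q.1 ∧ p.2 = Sym.map ρ q.2 := by
  rw [mem_orbit_symm]
  exact exists_congr fun ρ => by rw [eq_comm, Prod.ext_iff]; rfl

theorem entryEquiv_Tmap (lam mu : Sym (Fin n) k) :
    entryEquiv ℂ _ (Tmap n k lam mu) = orbitIndicator (Equiv.Perm (Fin n)) ℂ (lam, mu) := by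
  funext q
  simp only [Tmap, map_sum, apply_ite, map_zero, entryEquiv_Eunit, Finset.sum_apply, ite_apply,
    Pi.zero_apply]
  rw [Finset.sum_eq_single q (fun p _ hpq => by simp [hpq.symm]) (by simp),
    orbitIndicator_apply, mem_orbit_iff_exists_map]
  simp

end Tmap

/-- The distinct elements `T^𝒞` (one for each equivalence class of pairs of
partitions, i.e. the distinct values of `(λ,μ) ↦ T^λ_μ`) are linearly independent,
and hence form a basis of the centralizer algebra `End_{S_n}(Sym^k(ℂⁿ))`. -/
theorem Tmap_linearIndependent_and_spans (n k : ℕ) :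
    LinearIndependent ℂ
      (fun x : Set.range (fun p : Sym (Fin n) k × Sym (Fin n) k => Tmap n k p.1 p.2) =>
        (x : Module.End ℂ (SymV n k))) ∧
    (↑(Submodule.span ℂ
        (Set.range fun p : Sym (Fin n) k × Sym (Fin n) k => Tmap n k p.1 p.2))
      : Set (Module.End ℂ (SymV n k))) = ↑(centAlg n k) := by
  have hrange : Set.range (fun p : Sym (Fin n) k × Sym (Fin n) k => Tmap n k p.1 p.2) =
      (entryEquiv ℂ _).symm '' Set.range (MulAction.orbitIndicator (Equiv.Perm (Fin n)) ℂ) := by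
    rw [← Set.range_comp]
    refine congrArg Set.range (funext fun p => ?_)
    rw [Function.comp_apply, ← entryEquiv_Tmap, LinearEquiv.symm_apply_apply]
  refine ⟨?_, ?_⟩
  · rw [hrange]
    exact (MulAction.linearIndepOn_id_range_orbitIndicator
      (G := Equiv.Perm (Fin n)) (K := ℂ)).image
      (by rw [LinearEquiv.ker]; exact disjoint_bot_right)
  · ext f
    rw [hrange, SetLike.mem_coe, ← LinearEquiv.coe_toLinearMap, Submodule.span_image,
      Submodule.mem_map_equiv, LinearEquiv.symm_symm, MulAction.mem_span_range_orbitIndicator_iff,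
      SetLike.mem_coe, mem_centAlg_iff]
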